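/- arXiv:2107.05261 — 6 statements merged into one kernel-verified Lean document; each statement's English description precedes it below -/
import Mathlib

section
/- In the category of coherence spaces, two morphisms s0, s1 ∈ COH(E,F) are summable (i.e., there exists g ∈ COH(E, S F) with π_i ∘ g = s_i) if and only if s0 ∩ s1 = ∅ and s0 ∪ s1 ∈ COH(E,F). -/
structure CoherenceSpace where
  web : Type
  coh : web → web → Prop
  refl : ∀ a, coh a a
  symm : ∀ a b, coh a b → coh b a

def CoherenceSpace.Clique (E : CoherenceSpace) (x : Set E.web) : Prop :=
  ∀ a ∈ x, ∀ b ∈ x, E.coh a b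

def CoherenceSpace.Sfun (E : CoherenceSpace) : CoherenceSpace where
  web := Bool × E.web
  coh p q := (p.1 = q.1 ∧ E.coh p.2 q.2) ∨ (p.1 ≠ q.1 ∧ E.coh p.2 q.2 ∧ p.2 ≠ q.2)
  refl a := Or.inl ⟨rfl, E.refl a.2⟩
  symm a b h := by
    rcases h with ⟨h1, h2⟩ | ⟨h1, h2, h3⟩
    · exact Or.inl ⟨h1.symm, E.symm _ _ h2⟩
    · exact Or.inr ⟨fun e => h1 e.symm, E.symm _ _ h2, fun e => h3 e.symm⟩

/-- The linear function space E ⊸ F of coherence spaces. -/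
def CoherenceSpace.Limpl (E F : CoherenceSpace) : CoherenceSpace where
  web := E.web × F.web
  coh p q := E.coh p.1 q.1 → (F.coh p.2 q.2 ∧ (p.2 = q.2 → p.1 = q.1))
  refl a := fun _ => ⟨F.refl a.2, fun _ => rfl⟩
  symm a b h := fun hc => by
    have h' := h (E.symm _ _ hc)
    exact ⟨F.symm _ _ h'.1, fun e => (h'.2 e.symm).symm⟩

/-- Relational composition. -/
def relComp {α β γ : Type} (s : Set (α × β)) (t : Set (β × γ)) : Set (α × γ) :=
  {p | ∃ b, (p.1, b) ∈ s ∧ (b, p.2) ∈ t}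

/-- The projections π_i = {((i, b), b) | b ∈ |F|} ∈ COH(S F, F). -/
def CoherenceSpace.proj (F : CoherenceSpace) (i : Bool) : Set ((F.Sfun).web × F.web) :=
  {p | p.1 = (i, p.2)}

/-!
Composition with `π_i` just reads off the `i`-tagged part of a relation `g ⊆ |E| × ({0,1} × |F|)`,
so `π_0 ∘ g = s₀` and `π_1 ∘ g = s₁` pin `g` down as the tagged union `{(a, (i, b)) | (a, b) ∈ sᵢ}`.
Summability is therefore the statement that this tagged union is a clique of `E ⊸ S F`, and
unfolding the coherence of `S F` shows that this happens exactly when `s₀ ∪ s₁` is a clique and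
no pair `(a, b)` carries both tags.
-/

/-- The pairing `⟨s₀, s₁⟩ = {(a, (i, b)) | (a, b) ∈ sᵢ}`. -/
def relCopair {α β : Type} (s0 s1 : Set (α × β)) : Set (α × (Bool × β)) :=
  {p | (p.1, p.2.2) ∈ cond p.2.1 s1 s0}

namespace CoherenceSpace

variable {E F : CoherenceSpace}

theorem sfun_coh_iff {i j : Bool} {b b' : F.web} :
    F.Sfun.coh (i, b) (j, b') ↔ F.coh b b' ∧ (i ≠ j → b ≠ b') := by
  change (i = j ∧ _) ∨ (i ≠ j ∧ _) ↔ _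
  by_cases hij : i = j <;> simp [hij]

theorem mem_relComp_proj {g : Set (E.web × F.Sfun.web)} {i : Bool} {a : E.web} {b : F.web} :
    (a, b) ∈ relComp g (F.proj i) ↔ (a, (i, b)) ∈ g := by
  constructor
  · rintro ⟨c, hc, rfl : c = (i, b)⟩
    exact hc
  · exact fun h => ⟨(i, b), h, rfl⟩

theorem relComp_proj_eq_iff (g : Set (E.Limpl F.Sfun).web) (s0 s1 : Set (E.Limpl F).web) :
    (relComp g (F.proj false) = s0 ∧ relComp g (F.proj true) = s1) ↔ g = relCopair s0 s1 := by
  constructor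
  · rintro ⟨rfl, rfl⟩
    ext ⟨a, i, b⟩
    cases i <;> exact mem_relComp_proj.symm
  · rintro rfl
    constructor <;> ext ⟨a, b⟩ <;> exact mem_relComp_proj

theorem mem_union_of_mem_relCopair {s0 s1 : Set (E.web × F.web)} {a : E.web} {i : Bool}
    {b : F.web} (h : (a, (i, b)) ∈ relCopair s0 s1) : (a, b) ∈ s0 ∪ s1 := by
  cases i
  exacts [Or.inl h, Or.inr h]

theorem mem_inter_of_mem_relCopair {s0 s1 : Set (E.web × F.web)} {a : E.web} {i j : Bool}
    {b : F.web} (hi : (a, (i, b)) ∈ relCopair s0 s1) (hj : (a, (j, b)) ∈ relCopair s0 s1)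
    (hij : i ≠ j) : (a, b) ∈ s0 ∩ s1 := by
  cases i <;> cases j
  exacts [absurd rfl hij, ⟨hi, hj⟩, ⟨hj, hi⟩, absurd rfl hij]

theorem clique_relCopair_iff (s0 s1 : Set (E.web × F.web)) :
    (E.Limpl F.Sfun).Clique (relCopair s0 s1) ↔ s0 ∩ s1 = ∅ ∧ (E.Limpl F).Clique (s0 ∪ s1) := by
  constructor
  · intro hg
    have coh_of_mem {a a' i j b b'} (hp : (a, (i, b)) ∈ relCopair s0 s1)
        (hq : (a', (j, b')) ∈ relCopair s0 s1) (ha : E.coh a a') :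
        (F.coh b b' ∧ (i ≠ j → b ≠ b')) ∧ ((i, b) = (j, b') → a = a') := by
      have h := hg _ hp _ hq ha
      exact ⟨sfun_coh_iff.1 h.1, h.2⟩
    constructor
    · refine Set.eq_empty_iff_forall_notMem.2 fun ⟨a, b⟩ ⟨h0, h1⟩ => ?_
      exact (coh_of_mem (i := false) (j := true) h0 h1 (E.refl a)).1.2 Bool.false_ne_true rfl
    · rintro ⟨a, b⟩ hp ⟨a', b'⟩ hq ha
      obtain ⟨i, hp⟩ : ∃ i, (a, (i, b)) ∈ relCopair s0 s1 := hp.elim (⟨false, ·⟩) (⟨true, ·⟩)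
      obtain ⟨j, hq⟩ : ∃ j, (a', (j, b')) ∈ relCopair s0 s1 := hq.elim (⟨false, ·⟩) (⟨true, ·⟩)
      obtain ⟨⟨hbb', hsep⟩, hinj⟩ := coh_of_mem hp hq ha
      refine ⟨hbb', fun hb => hinj ?_⟩
      by_cases hij : i = j
      · rw [hij, show b = b' from hb]
      · exact absurd hb (hsep hij)
  · rintro ⟨hdisj, hunion⟩ ⟨a, i, b⟩ hp ⟨a', j, b'⟩ hq ha
    obtain ⟨hbb', hinj⟩ := hunion _ (mem_union_of_mem_relCopair hp) _
      (mem_union_of_mem_relCopair hq) ha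
    refine ⟨sfun_coh_iff.2 ⟨hbb', fun hij hb => ?_⟩, fun he => hinj (Prod.ext_iff.1 he).2⟩
    obtain rfl := hb
    obtain rfl : a = a' := hinj rfl
    exact (Set.eq_empty_iff_forall_notMem.1 hdisj) _ (mem_inter_of_mem_relCopair hp hq hij)

end CoherenceSpace

theorem stmt1_general (E F : CoherenceSpace) (s0 s1 : Set ((E.Limpl F).web)) :
    (∃ g : Set ((E.Limpl F.Sfun).web), (E.Limpl F.Sfun).Clique g ∧
        relComp g (F.proj false) = s0 ∧ relComp g (F.proj true) = s1)
    ↔ (s0 ∩ s1 = ∅ ∧ (E.Limpl F).Clique (s0 ∪ s1)) := by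
  simp only [CoherenceSpace.relComp_proj_eq_iff]
  exact exists_eq_right.trans (CoherenceSpace.clique_relCopair_iff s0 s1)

/-- Two morphisms s0, s1 ∈ COH(E,F) are summable (there is g ∈ COH(E, S F) with
π_i ∘ g = s_i) iff s0 ∩ s1 = ∅ and s0 ∪ s1 ∈ COH(E,F). -/
theorem stmt1 (E F : CoherenceSpace) (s0 s1 : Set ((E.Limpl F).web))
    (h0 : (E.Limpl F).Clique s0) (h1 : (E.Limpl F).Clique s1) :
    (∃ g : Set ((E.Limpl F.Sfun).web), (E.Limpl F.Sfun).Clique g ∧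
        relComp g (F.proj false) = s0 ∧ relComp g (F.proj true) = s1)
    ↔ (s0 ∩ s1 = ∅ ∧ (E.Limpl F).Clique (s0 ∪ s1)) :=
  stmt1_general E F s0 s1
end

section
/- In a summable category, if f00, f01, f10, f11 ∈ L(X,Y) are such that (f00,f01) and (f10,f11) are summable and (f00+f01, f10+f11) is summable, then (f00,f10) and (f01,f11) are summable, (f00+f10, f01+f11) is summable, and (f00+f01)+(f10+f11) = (f00+f10)+(f01+f11). -/
/-!
Apply (S-wit) to the witnesses `w₀, w₁` of the two rows: it yields `W : X ⟶ S (S Y)`, a 2×2 matrix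
with rows `W ≫ π_i = w_i`. By naturality of `π_j`, `W ≫ S π_j` witnesses the `j`-th column,
`W ≫ σ_{SY}` witnesses the pair of column sums, and `W ≫ S σ` witnesses the pair of row sums, so it is
the given witness of `(s₀, s₁)` by joint monicity. Naturality of `σ` at `σ` equates the two totals.
-/

open CategoryTheory Limits

universe v u

/-- A pre-summability structure on a category enriched over pointed sets
(rendered via zero morphisms): a functor S preserving zero morphisms with
three natural transformations π0, π1, σ to the identity such that π0, π1
are jointly monic. -/
structure PreSummability (L : Type u) [Category.{v} L] [HasZeroMorphisms L] where
  S : L ⥤ L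
  p0 : S ⟶ 𝟭 L
  p1 : S ⟶ 𝟭 L
  sg : S ⟶ 𝟭 L
  S_zero : ∀ (X Y : L), S.map (0 : X ⟶ Y) = 0
  jointly_monic : ∀ {X Y : L} (f g : X ⟶ S.obj Y),
    f ≫ p0.app Y = g ≫ p0.app Y → f ≫ p1.app Y = g ≫ p1.app Y → f = g

variable {L : Type u} [Category.{v} L] [HasZeroMorphisms L]

/-- `w` is the witness of summability of `f0` and `f1`. -/
def PreSummability.IsWitness (P : PreSummability L) {X Y : L}
    (f0 f1 : X ⟶ Y) (w : X ⟶ P.S.obj Y) : Prop :=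
  w ≫ P.p0.app Y = f0 ∧ w ≫ P.p1.app Y = f1

/-- `f0` and `f1` are summable. -/
def PreSummability.Summable (P : PreSummability L) {X Y : L} (f0 f1 : X ⟶ Y) : Prop :=
  ∃ w, P.IsWitness f0 f1 w

/-- `s` is the sum `f0 + f1` of the summable pair `(f0, f1)`. -/
def PreSummability.IsSum (P : PreSummability L) {X Y : L} (f0 f1 s : X ⟶ Y) : Prop :=
  ∃ w, P.IsWitness f0 f1 w ∧ w ≫ P.sg.app Y = s

/-- A summability structure: a pre-summability structure satisfying the axioms
(S-com), (S-zero), (S-wit) and (S-ass). In (S-ass) the flip `c` is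
characterized by the equations π_i ∘ π_j ∘ c = π_j ∘ π_i. -/
structure SummabilityStructure (L : Type u) [Category.{v} L] [HasZeroMorphisms L]
    extends PreSummability L where
  ax_com : ∀ X : L, ∃ w : S.obj X ⟶ S.obj X,
    toPreSummability.IsWitness (p1.app X) (p0.app X) w ∧ w ≫ sg.app X = sg.app X
  ax_zero : ∀ {X Y : L} (f : X ⟶ Y), toPreSummability.IsSum f 0 f
  ax_wit : ∀ {X Y : L} (w0 w1 : X ⟶ S.obj Y),
    toPreSummability.Summable (w0 ≫ sg.app Y) (w1 ≫ sg.app Y) →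
    toPreSummability.Summable w0 w1
  ax_ass : ∀ (X : L) (c : S.obj (S.obj X) ⟶ S.obj (S.obj X)),
    (c ≫ p0.app (S.obj X) ≫ p0.app X = p0.app (S.obj X) ≫ p0.app X) →
    (c ≫ p0.app (S.obj X) ≫ p1.app X = p1.app (S.obj X) ≫ p0.app X) →
    (c ≫ p1.app (S.obj X) ≫ p0.app X = p0.app (S.obj X) ≫ p1.app X) →
    (c ≫ p1.app (S.obj X) ≫ p1.app X = p1.app (S.obj X) ≫ p1.app X) →
    c ≫ S.map (sg.app X) = sg.app (S.obj X)

namespace PreSummability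

variable {X Y Z : L}

theorem IsWitness.unique {P : PreSummability L} {f0 f1 : X ⟶ Y} {w w' : X ⟶ P.S.obj Y}
    (hw : P.IsWitness f0 f1 w) (hw' : P.IsWitness f0 f1 w') : w = w' :=
  P.jointly_monic w w' (hw.1.trans hw'.1.symm) (hw.2.trans hw'.2.symm)

theorem IsWitness.comp_map {P : PreSummability L} {f0 f1 : X ⟶ Y} {w : X ⟶ P.S.obj Y}
    (hw : P.IsWitness f0 f1 w) (g : Y ⟶ Z) :
    P.IsWitness (f0 ≫ g) (f1 ≫ g) (w ≫ P.S.map g) := by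
  constructor
  · rw [Category.assoc, P.p0.naturality, ← Category.assoc, hw.1]; rfl
  · rw [Category.assoc, P.p1.naturality, ← Category.assoc, hw.2]; rfl

/-- Read `W` as a 2×2 matrix with rows `W ≫ π_i`; then `W ≫ S.map π_j` is its `j`-th column. -/
theorem isSum_columnSums (P : PreSummability L) (W : X ⟶ P.S.obj (P.S.obj Y)) :
    P.IsSum ((W ≫ P.S.map (P.p0.app Y)) ≫ P.sg.app Y) ((W ≫ P.S.map (P.p1.app Y)) ≫ P.sg.app Y)
      ((W ≫ P.S.map (P.sg.app Y)) ≫ P.sg.app Y) := by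
  refine ⟨W ≫ P.sg.app (P.S.obj Y), ⟨?_, ?_⟩, ?_⟩ <;>
    simp only [Category.assoc] <;> exact congrArg (W ≫ ·) (P.sg.naturality _).symm

end PreSummability

/-- In a summable category: if `(f00,f01)` and `(f10,f11)` are summable with
sums `s0, s1` and `(s0, s1)` is summable with sum `t`, then `(f00,f10)` and
`(f01,f11)` are summable, their sums are summable, and the total sums agree:
`(f00+f01)+(f10+f11) = (f00+f10)+(f01+f11)`. -/
theorem stmt4 (Q : SummabilityStructure L) {X Y : L}
    (f00 f01 f10 f11 s0 s1 t : X ⟶ Y)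
    (h0 : Q.toPreSummability.IsSum f00 f01 s0)
    (h1 : Q.toPreSummability.IsSum f10 f11 s1)
    (ht : Q.toPreSummability.IsSum s0 s1 t) :
    ∃ u0 u1 : X ⟶ Y,
      Q.toPreSummability.IsSum f00 f10 u0 ∧
      Q.toPreSummability.IsSum f01 f11 u1 ∧
      Q.toPreSummability.IsSum u0 u1 t := by
  obtain ⟨w0, ⟨rfl, rfl⟩, rfl⟩ := h0
  obtain ⟨w1, ⟨rfl, rfl⟩, rfl⟩ := h1
  obtain ⟨v, hv, rfl⟩ := ht
  obtain ⟨W, hW⟩ := Q.ax_wit w0 w1 ⟨v, hv⟩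
  have hv_eq : v = W ≫ Q.S.map (Q.sg.app Y) := hv.unique (hW.comp_map _)
  refine ⟨_, _, ⟨_, hW.comp_map (Q.p0.app Y), rfl⟩, ⟨_, hW.comp_map (Q.p1.app Y), rfl⟩, ?_⟩
  rw [hv_eq]
  exact Q.isSum_columnSums W
end

section
/- In a summable category, if f0, f1 ∈ L(X,Y) are summable then S f0 and S f1 ∈ L(S X, S Y) are summable with witness c ∘ S⟨f0,f1⟩ (where c is the flip on S²Y) and S f0 + S f1 = S(f0+f1). -/
/-! The flip `c` is an involution, because its composites with the projections determine it
(π₀, π₁ are jointly monic) and `c ∘ c` has the same composites as the identity. Hence (S-ass),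
`S σ ∘ c = σ`, can be read as `σ ∘ c = S σ`, which turns `σ ∘ c ∘ S w` into `S (σ ∘ w) = S s`. -/

open CategoryTheory Limits

universe v u

variable {L : Type u} [Category.{v} L] [HasZeroMorphisms L]

namespace PreSummability

variable (P : PreSummability L)

structure IsFlip (Y : L) (c : P.S.obj (P.S.obj Y) ⟶ P.S.obj (P.S.obj Y)) : Prop where
  p00 : c ≫ P.p0.app (P.S.obj Y) ≫ P.p0.app Y = P.p0.app (P.S.obj Y) ≫ P.p0.app Y
  p01 : c ≫ P.p0.app (P.S.obj Y) ≫ P.p1.app Y = P.p1.app (P.S.obj Y) ≫ P.p0.app Y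
  p10 : c ≫ P.p1.app (P.S.obj Y) ≫ P.p0.app Y = P.p0.app (P.S.obj Y) ≫ P.p1.app Y
  p11 : c ≫ P.p1.app (P.S.obj Y) ≫ P.p1.app Y = P.p1.app (P.S.obj Y) ≫ P.p1.app Y

theorem hom_ext₂ {X Y : L} {f g : X ⟶ P.S.obj (P.S.obj Y)}
    (h00 : f ≫ P.p0.app (P.S.obj Y) ≫ P.p0.app Y = g ≫ P.p0.app (P.S.obj Y) ≫ P.p0.app Y)
    (h01 : f ≫ P.p0.app (P.S.obj Y) ≫ P.p1.app Y = g ≫ P.p0.app (P.S.obj Y) ≫ P.p1.app Y)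
    (h10 : f ≫ P.p1.app (P.S.obj Y) ≫ P.p0.app Y = g ≫ P.p1.app (P.S.obj Y) ≫ P.p0.app Y)
    (h11 : f ≫ P.p1.app (P.S.obj Y) ≫ P.p1.app Y = g ≫ P.p1.app (P.S.obj Y) ≫ P.p1.app Y) :
    f = g := by
  simp only [← Category.assoc] at h00 h01 h10 h11
  exact P.jointly_monic f g (P.jointly_monic _ _ h00 h01) (P.jointly_monic _ _ h10 h11)

theorem IsFlip.comp_self {Y : L} {c : P.S.obj (P.S.obj Y) ⟶ P.S.obj (P.S.obj Y)}
    (hc : P.IsFlip Y c) : c ≫ c = 𝟙 _ := by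
  apply P.hom_ext₂ <;> simp only [Category.assoc, Category.id_comp]
  · rw [hc.p00, hc.p00]
  · rw [hc.p01, hc.p10]
  · rw [hc.p10, hc.p01]
  · rw [hc.p11, hc.p11]

theorem map_comp_p0 {A B : L} (g : A ⟶ B) : P.S.map g ≫ P.p0.app B = P.p0.app A ≫ g :=
  P.p0.naturality g

theorem map_comp_p1 {A B : L} (g : A ⟶ B) : P.S.map g ≫ P.p1.app B = P.p1.app A ≫ g :=
  P.p1.naturality g

/-- By naturality `π_j ∘ π_i ∘ S w = f_j ∘ π_i`, whereas `π_j ∘ S f_i = f_i ∘ π_j`: the roles of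
`i` and `j` are exchanged, and the flip exchanges them back. -/
theorem IsWitness.map_comp_flip {X Y : L} {f0 f1 : X ⟶ Y} {w : X ⟶ P.S.obj Y}
    (hw : P.IsWitness f0 f1 w) {c : P.S.obj (P.S.obj Y) ⟶ P.S.obj (P.S.obj Y)}
    (hc : P.IsFlip Y c) : P.IsWitness (P.S.map f0) (P.S.map f1) (P.S.map w ≫ c) := by
  obtain ⟨h0, h1⟩ := hw
  constructor <;> apply P.jointly_monic <;> simp only [Category.assoc]
  · rw [hc.p00, ← Category.assoc, map_comp_p0, Category.assoc, h0, map_comp_p0]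
  · rw [hc.p01, ← Category.assoc, map_comp_p1, Category.assoc, h0, map_comp_p1]
  · rw [hc.p10, ← Category.assoc, map_comp_p0, Category.assoc, h1, map_comp_p0]
  · rw [hc.p11, ← Category.assoc, map_comp_p1, Category.assoc, h1, map_comp_p1]

end PreSummability

theorem SummabilityStructure.flip_comp_sg (Q : SummabilityStructure L) {Y : L}
    {c : Q.S.obj (Q.S.obj Y) ⟶ Q.S.obj (Q.S.obj Y)} (hc : Q.IsFlip Y c) :
    c ≫ Q.sg.app (Q.S.obj Y) = Q.S.map (Q.sg.app Y) := by
  rw [← Q.ax_ass Y c hc.p00 hc.p01 hc.p10 hc.p11, ← Category.assoc, hc.comp_self,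
    Category.id_comp]

/-- If `f0, f1` are summable (witness `w`, sum `s`) then `S f0, S f1` are
summable with witness `c ∘ S w` (where `c` is the flip of `S²Y`, characterized
by π_i∘π_j∘c = π_j∘π_i) and `S f0 + S f1 = S (f0 + f1)`. -/
theorem stmt8 (Q : SummabilityStructure L) {X Y : L} (f0 f1 s : X ⟶ Y)
    (w : X ⟶ Q.S.obj Y) (hw : Q.toPreSummability.IsWitness f0 f1 w)
    (hs : w ≫ Q.sg.app Y = s)
    (c : Q.S.obj (Q.S.obj Y) ⟶ Q.S.obj (Q.S.obj Y))
    (hc00 : c ≫ Q.p0.app (Q.S.obj Y) ≫ Q.p0.app Y = Q.p0.app (Q.S.obj Y) ≫ Q.p0.app Y)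
    (hc01 : c ≫ Q.p0.app (Q.S.obj Y) ≫ Q.p1.app Y = Q.p1.app (Q.S.obj Y) ≫ Q.p0.app Y)
    (hc10 : c ≫ Q.p1.app (Q.S.obj Y) ≫ Q.p0.app Y = Q.p0.app (Q.S.obj Y) ≫ Q.p1.app Y)
    (hc11 : c ≫ Q.p1.app (Q.S.obj Y) ≫ Q.p1.app Y = Q.p1.app (Q.S.obj Y) ≫ Q.p1.app Y) :
    Q.toPreSummability.IsWitness (Q.S.map f0) (Q.S.map f1) (Q.S.map w ≫ c) ∧
    (Q.S.map w ≫ c) ≫ Q.sg.app (Q.S.obj Y) = Q.S.map s := by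
  have hc : Q.IsFlip Y c := ⟨hc00, hc01, hc10, hc11⟩
  refine ⟨hw.map_comp_flip _ hc, ?_⟩
  rw [Category.assoc, Q.flip_comp_sg hc, ← Q.S.map_comp, hs]
end

section
/- In a summable category, the functor S carries a monad structure with unit ι0 = ⟨Id, 0⟩ : X → S X and multiplication τ = ⟨π0∘π0, π1∘π0 + π0∘π1⟩ : S²X → S X; moreover τ ∘ c = τ where c is the flip. -/
/-!
Every law is checked componentwise, since `π0, π1` are jointly monic. The `π0`-components
agree by naturality; the `π1`-components are binary sums, compared by uniqueness of sums,
commutativity (S-com) and `0 + f = f` (S-zero). Associativity of `τ` needs associativity of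
sums, which comes from summing a `2 × 2` matrix `X ⟶ S²Y` by rows and by columns: (S-wit)
provides the matrix and (S-ass) says the two totals agree.
-/

open CategoryTheory Limits

universe v u

variable {L : Type u} [Category.{v} L] [HasZeroMorphisms L]

namespace SummabilityStructure

variable (Q : SummabilityStructure L)

/-- `c : S²X ⟶ S²X` is the flip of axiom (S-ass). -/
def IsFlip (X : L) (c : Q.S.obj (Q.S.obj X) ⟶ Q.S.obj (Q.S.obj X)) : Prop :=
  c ≫ Q.p0.app (Q.S.obj X) ≫ Q.p0.app X = Q.p0.app (Q.S.obj X) ≫ Q.p0.app X ∧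
  c ≫ Q.p0.app (Q.S.obj X) ≫ Q.p1.app X = Q.p1.app (Q.S.obj X) ≫ Q.p0.app X ∧
  c ≫ Q.p1.app (Q.S.obj X) ≫ Q.p0.app X = Q.p0.app (Q.S.obj X) ≫ Q.p1.app X ∧
  c ≫ Q.p1.app (Q.S.obj X) ≫ Q.p1.app X = Q.p1.app (Q.S.obj X) ≫ Q.p1.app X

lemma IsFlip.comp_map_sg {X : L} {c : Q.S.obj (Q.S.obj X) ⟶ Q.S.obj (Q.S.obj X)}
    (hc : Q.IsFlip X c) : c ≫ Q.S.map (Q.sg.app X) = Q.sg.app (Q.S.obj X) :=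
  Q.ax_ass X c hc.1 hc.2.1 hc.2.2.1 hc.2.2.2

/-- Summing a matrix `W ⟶ S²X` by rows or, after the flip, by columns gives the same total. -/
lemma IsFlip.comp_map_sg_sg {X : L} {c : Q.S.obj (Q.S.obj X) ⟶ Q.S.obj (Q.S.obj X)}
    (hc : Q.IsFlip X c) :
    c ≫ Q.S.map (Q.sg.app X) ≫ Q.sg.app X = Q.S.map (Q.sg.app X) ≫ Q.sg.app X := by
  rw [reassoc_of% hc.comp_map_sg]
  exact (Q.sg.naturality (Q.sg.app X)).symm

lemma exists_isFlip (X : L) : ∃ c, Q.IsFlip X c := by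
  obtain ⟨c, hc0, hc1⟩ : Q.Summable (Q.S.map (Q.p0.app X)) (Q.S.map (Q.p1.app X)) :=
    Q.ax_wit _ _ ⟨Q.sg.app (Q.S.obj X), (Q.sg.naturality _).symm, (Q.sg.naturality _).symm⟩
  simp only [Functor.id_obj] at hc0 hc1
  refine ⟨c, ?_, ?_, ?_, ?_⟩ <;> simp [reassoc_of% hc0, reassoc_of% hc1]

lemma isWitness_comp_map {X Y Z : L} (w : X ⟶ Q.S.obj Y) (g : Y ⟶ Z) :
    Q.IsWitness (w ≫ Q.p0.app Y ≫ g) (w ≫ Q.p1.app Y ≫ g) (w ≫ Q.S.map g) := by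
  constructor <;> simp

lemma eq_of_isWitness {X Y : L} {f0 f1 : X ⟶ Y} {w w' : X ⟶ Q.S.obj Y}
    (h : Q.IsWitness f0 f1 w) (h' : Q.IsWitness f0 f1 w') : w = w' :=
  Q.jointly_monic w w' (h.1.trans h'.1.symm) (h.2.trans h'.2.symm)

lemma eq_of_isSum {X Y : L} {f0 f1 s s' : X ⟶ Y}
    (h : Q.IsSum f0 f1 s) (h' : Q.IsSum f0 f1 s') : s = s' := by
  obtain ⟨w, hw, rfl⟩ := h
  obtain ⟨w', hw', rfl⟩ := h'
  rw [Q.eq_of_isWitness hw hw']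

lemma isSum_comp_left {W X Y : L} (h : W ⟶ X) {f0 f1 s : X ⟶ Y}
    (hs : Q.IsSum f0 f1 s) : Q.IsSum (h ≫ f0) (h ≫ f1) (h ≫ s) := by
  obtain ⟨w, ⟨rfl, rfl⟩, rfl⟩ := hs
  exact ⟨h ≫ w, ⟨by simp, by simp⟩, by simp⟩

lemma isSum_comp_right {X Y Z : L} (g : Y ⟶ Z) {f0 f1 s : X ⟶ Y}
    (hs : Q.IsSum f0 f1 s) : Q.IsSum (f0 ≫ g) (f1 ≫ g) (s ≫ g) := by
  obtain ⟨w, ⟨rfl, rfl⟩, rfl⟩ := hs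
  refine ⟨w ≫ Q.S.map g, by simpa using Q.isWitness_comp_map w g, ?_⟩
  simp

lemma isSum_comm {X Y : L} {f0 f1 s : X ⟶ Y} (h : Q.IsSum f0 f1 s) : Q.IsSum f1 f0 s := by
  obtain ⟨w, ⟨rfl, rfl⟩, rfl⟩ := h
  obtain ⟨c, ⟨hc0, hc1⟩, hcs⟩ := Q.ax_com Y
  simp only [Functor.id_obj] at hc0 hc1
  exact ⟨w ≫ c, ⟨by simp [hc0], by simp [hc1]⟩, by simp [hcs]⟩

lemma isSum_zero_left {X Y : L} (f : X ⟶ Y) : Q.IsSum 0 f f :=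
  Q.isSum_comm (Q.ax_zero f)

/-- `(a + b) + c = a + (b + c)`: the matrix with rows `(a, b)` and `(0, c)` is summed
by rows and by columns. -/
lemma isSum_assoc {X Y : L} {a b c u v s t : X ⟶ Y}
    (hu : Q.IsSum a b u) (hs : Q.IsSum u c s) (hv : Q.IsSum b c v) (ht : Q.IsSum a v t) :
    s = t := by
  obtain ⟨wab, hwab, rfl⟩ := hu
  obtain ⟨wu, hwu, rfl⟩ := hs
  obtain ⟨wbc, hwbc, rfl⟩ := hv
  obtain ⟨wv, hwv, rfl⟩ := ht
  obtain ⟨w0c, hw0c, hw0cs⟩ := Q.isSum_zero_left c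
  obtain ⟨wa0, hwa0, hwa0s⟩ := Q.ax_zero a
  obtain ⟨W, hW0, hW1⟩ : Q.Summable wab w0c :=
    Q.ax_wit _ _ (by rw [hw0cs]; exact ⟨wu, hwu⟩)
  obtain ⟨fl, hfl⟩ := Q.exists_isFlip Y
  have hrows : W ≫ Q.S.map (Q.sg.app Y) = wu := by
    refine Q.eq_of_isWitness ?_ hwu
    simpa [reassoc_of% hW0, reassoc_of% hW1, hw0cs] using Q.isWitness_comp_map W (Q.sg.app Y)
  have hcol0 : W ≫ fl ≫ Q.p0.app (Q.S.obj Y) = wa0 := by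
    refine Q.eq_of_isWitness ⟨?_, ?_⟩ hwa0 <;> simp only [Category.assoc]
    · rw [hfl.1, reassoc_of% hW0, hwab.1]
    · rw [hfl.2.1, reassoc_of% hW1, hw0c.1]
  have hcol1 : W ≫ fl ≫ Q.p1.app (Q.S.obj Y) = wbc := by
    refine Q.eq_of_isWitness ⟨?_, ?_⟩ hwbc <;> simp only [Category.assoc]
    · rw [hfl.2.2.1, reassoc_of% hW0, hwab.2]
    · rw [hfl.2.2.2, reassoc_of% hW1, hw0c.2]
  have hcols : W ≫ fl ≫ Q.S.map (Q.sg.app Y) = wv := by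
    refine Q.eq_of_isWitness ?_ hwv
    simpa [reassoc_of% hcol0, reassoc_of% hcol1, hwa0s] using
      Q.isWitness_comp_map (W ≫ fl) (Q.sg.app Y)
  rw [← hrows, ← hcols, Category.assoc, Category.assoc, Category.assoc, hfl.comp_map_sg_sg]

section Monad

variable {Q} {ι : ∀ X : L, X ⟶ Q.S.obj X} {τ : ∀ X : L, Q.S.obj (Q.S.obj X) ⟶ Q.S.obj X}

lemma unit_naturality (hι : ∀ X : L, Q.IsWitness (𝟙 X) 0 (ι X)) {X Y : L} (f : X ⟶ Y) :
    ι X ≫ Q.S.map f = f ≫ ι Y := by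
  apply Q.jointly_monic <;>
    simp [reassoc_of% (hι X).1, reassoc_of% (hι X).2, (hι Y).1, (hι Y).2]

variable (hτ0 : ∀ X : L, τ X ≫ Q.p0.app X = Q.p0.app (Q.S.obj X) ≫ Q.p0.app X)
variable (hτ1 : ∀ X : L, Q.IsSum
    (Q.p1.app (Q.S.obj X) ≫ Q.p0.app X) (Q.p0.app (Q.S.obj X) ≫ Q.p1.app X) (τ X ≫ Q.p1.app X))
include hτ1

lemma comp_mul_p1_eq {W X : L} (g : W ⟶ Q.S.obj (Q.S.obj X)) {s : W ⟶ X}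
    (hs : Q.IsSum (g ≫ Q.p1.app (Q.S.obj X) ≫ Q.p0.app X)
      (g ≫ Q.p0.app (Q.S.obj X) ≫ Q.p1.app X) s) :
    g ≫ τ X ≫ Q.p1.app X = s :=
  Q.eq_of_isSum (Q.isSum_comp_left g (hτ1 X)) hs

include hτ0

lemma mul_naturality {X Y : L} (f : X ⟶ Y) : Q.S.map (Q.S.map f) ≫ τ Y = τ X ≫ Q.S.map f := by
  apply Q.jointly_monic
  · simp [hτ0, reassoc_of% (hτ0 X)]
  · simp only [Category.assoc]
    refine comp_mul_p1_eq hτ1 _ ?_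
    simpa using Q.isSum_comp_right f (hτ1 X)

lemma left_unit (hι : ∀ X : L, Q.IsWitness (𝟙 X) 0 (ι X)) (X : L) :
    ι (Q.S.obj X) ≫ τ X = 𝟙 (Q.S.obj X) := by
  apply Q.jointly_monic
  · simp [hτ0, reassoc_of% (hι (Q.S.obj X)).1]
  · simp only [Category.assoc]
    refine comp_mul_p1_eq hτ1 _ ?_
    simpa [reassoc_of% (hι (Q.S.obj X)).1, reassoc_of% (hι (Q.S.obj X)).2] using
      Q.isSum_zero_left (Q.p1.app X)

lemma right_unit (hι : ∀ X : L, Q.IsWitness (𝟙 X) 0 (ι X)) (X : L) :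
    Q.S.map (ι X) ≫ τ X = 𝟙 (Q.S.obj X) := by
  apply Q.jointly_monic
  · simp [hτ0, (hι X).1]
  · simp only [Category.assoc]
    refine comp_mul_p1_eq hτ1 _ ?_
    simpa [(hι _).1, (hι _).2] using Q.ax_zero (Q.p1.app X)

lemma assoc (X : L) : τ (Q.S.obj X) ≫ τ X = Q.S.map (τ X) ≫ τ X := by
  apply Q.jointly_monic
  · simp [hτ0, reassoc_of% (hτ0 (Q.S.obj X))]
  · simp only [Category.assoc]
    have hu := Q.isSum_comp_right (Q.p0.app X) (hτ1 (Q.S.obj X))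
    have hs := Q.isSum_comp_left (τ (Q.S.obj X)) (hτ1 X)
    have hv := Q.isSum_comp_left (Q.p0.app (Q.S.obj (Q.S.obj X))) (hτ1 X)
    have ht := Q.isSum_comp_left (Q.S.map (τ X)) (hτ1 X)
    simp only [Functor.id_obj, Category.assoc, NatTrans.naturality_assoc, Functor.id_map,
      hτ0 X, reassoc_of% (hτ0 (Q.S.obj X))] at hu hs hv ht
    exact Q.isSum_assoc hu hs hv ht

lemma flip_comp_mul {X : L} {c : Q.S.obj (Q.S.obj X) ⟶ Q.S.obj (Q.S.obj X)}
    (hc : Q.IsFlip X c) : c ≫ τ X = τ X := by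
  apply Q.jointly_monic
  · simpa [hτ0] using hc.1
  · simp only [Category.assoc]
    refine comp_mul_p1_eq hτ1 _ (Q.isSum_comm ?_)
    simpa [hc.2.1, hc.2.2.1] using hτ1 X

end Monad

end SummabilityStructure

/-- The functor S of a summable category carries a monad structure with unit
ι0 = ⟨Id, 0⟩ and multiplication τ = ⟨π0∘π0, π1∘π0 + π0∘π1⟩ (ι and τ are here
given by their defining characterizations): ι and τ are natural, satisfy the
monad laws, and τ ∘ c = τ for the flip c. -/
theorem stmt9 (Q : SummabilityStructure L)
    (ι : ∀ X : L, X ⟶ Q.S.obj X)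
    (τ : ∀ X : L, Q.S.obj (Q.S.obj X) ⟶ Q.S.obj X)
    (hι : ∀ X : L, Q.toPreSummability.IsWitness (𝟙 X) 0 (ι X))
    (hτ0 : ∀ X : L, τ X ≫ Q.p0.app X = Q.p0.app (Q.S.obj X) ≫ Q.p0.app X)
    (hτ1 : ∀ X : L, Q.toPreSummability.IsSum
        (Q.p1.app (Q.S.obj X) ≫ Q.p0.app X) (Q.p0.app (Q.S.obj X) ≫ Q.p1.app X)
        (τ X ≫ Q.p1.app X)) :
    (∀ {X Y : L} (f : X ⟶ Y), ι X ≫ Q.S.map f = f ≫ ι Y) ∧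
    (∀ {X Y : L} (f : X ⟶ Y),
      Q.S.map (Q.S.map f) ≫ τ Y = τ X ≫ Q.S.map f) ∧
    (∀ X : L, ι (Q.S.obj X) ≫ τ X = 𝟙 (Q.S.obj X)) ∧
    (∀ X : L, Q.S.map (ι X) ≫ τ X = 𝟙 (Q.S.obj X)) ∧
    (∀ X : L, τ (Q.S.obj X) ≫ τ X = Q.S.map (τ X) ≫ τ X) ∧
    (∀ (X : L) (c : Q.S.obj (Q.S.obj X) ⟶ Q.S.obj (Q.S.obj X)),
      (c ≫ Q.p0.app (Q.S.obj X) ≫ Q.p0.app X = Q.p0.app (Q.S.obj X) ≫ Q.p0.app X) →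
      (c ≫ Q.p0.app (Q.S.obj X) ≫ Q.p1.app X = Q.p1.app (Q.S.obj X) ≫ Q.p0.app X) →
      (c ≫ Q.p1.app (Q.S.obj X) ≫ Q.p0.app X = Q.p0.app (Q.S.obj X) ≫ Q.p1.app X) →
      (c ≫ Q.p1.app (Q.S.obj X) ≫ Q.p1.app X = Q.p1.app (Q.S.obj X) ≫ Q.p1.app X) →
      c ≫ τ X = τ X) :=
  ⟨SummabilityStructure.unit_naturality hι,
    SummabilityStructure.mul_naturality hτ0 hτ1,
    SummabilityStructure.left_unit hτ0 hτ1 hι,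
    SummabilityStructure.right_unit hτ0 hτ1 hι,
    SummabilityStructure.assoc hτ0 hτ1,
    fun _ _ h00 h01 h10 h11 => SummabilityStructure.flip_comp_mul hτ0 hτ1 ⟨h00, h01, h10, h11⟩⟩
end

section
/- For any Lafont SMC L, the category of commutative comonoids in L and the Eilenberg–Moore category of !-coalgebras are isomorphic, via the functor sending a comonoid C to (C, δ_C) and the functor sending a coalgebra (P,h) to (P, w∘h, (ε⊗ε)∘c∘h), both acting as the identity on morphisms. -/
/-!
Two comonoid morphisms into a cofree `!X` that agree after `ε` are equal; this identifies `δ_C`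
followed by the digging with `δ_C` followed by `!δ_C`, and a comonoid morphism `f` with a
coalgebra morphism. Conversely, applying `c` and then `ε ⊗ ε` to the coassociativity
`h ≫ dig = h ≫ !h` of a coalgebra `(P, h)` shows that `h` carries `d = h ≫ c ≫ (ε ⊗ ε)` to the
comultiplication of `!P`; as `h` is split by `ε`, the comonoid laws of `!P` restrict to `(P, d)`.
-/

open CategoryTheory MonoidalCategory

universe v u

variable {L : Type u} [Category.{v} L] [MonoidalCategory L] [SymmetricCategory L]

/-- `(X, w, d)` is a commutative comonoid in the SMC `L`. -/
structure IsCComon {X : L} (w : X ⟶ 𝟙_ L) (d : X ⟶ X ⊗ X) : Prop where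
  counit : d ≫ (w ▷ X) = (λ_ X).inv
  comm : d ≫ (β_ X X).hom = d
  coassoc : d ≫ (d ▷ X) ≫ (α_ X X X).hom = d ≫ (X ◁ d)

/-- The middle-swap (A ⊗ B) ⊗ (C ⊗ D) ⟶ (A ⊗ C) ⊗ (B ⊗ D). -/
def midSwap (A B C D : L) : (A ⊗ B) ⊗ (C ⊗ D) ⟶ (A ⊗ C) ⊗ (B ⊗ D) :=
  (α_ A B (C ⊗ D)).hom ≫
    (A ◁ ((α_ B C D).inv ≫ ((β_ B C).hom ▷ D) ≫ (α_ C B D).hom)) ≫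
    (α_ A C (B ⊗ D)).inv

/-- `f` is a comonoid morphism from `(X, wX, dX)` to `(Y, wY, dY)`. -/
def IsComonHom {X Y : L} (wX : X ⟶ 𝟙_ L) (dX : X ⟶ X ⊗ X)
    (wY : Y ⟶ 𝟙_ L) (dY : Y ⟶ Y ⊗ Y) (f : X ⟶ Y) : Prop :=
  f ≫ wY = wX ∧ f ≫ dY = dX ≫ (f ⊗ₘ f)

/-- A Lafont exponential on an SMC: each object `X` has a cofree commutative
comonoid `(!X, w X, c X)` with counit-of-cofreeness `eps X : !X ⟶ X`:
every morphism from a commutative comonoid to `X` lifts uniquely to a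
comonoid morphism into `!X`. -/
structure Lafont (L : Type u) [Category.{v} L] [MonoidalCategory L] [SymmetricCategory L] where
  bang : L → L
  eps : ∀ X : L, bang X ⟶ X
  w : ∀ X : L, bang X ⟶ 𝟙_ L
  c : ∀ X : L, bang X ⟶ bang X ⊗ bang X
  comon : ∀ X : L, IsCComon (w X) (c X)
  cofree : ∀ {X C : L} (wC : C ⟶ 𝟙_ L) (dC : C ⟶ C ⊗ C), IsCComon wC dC →
    ∀ f : C ⟶ X, ∃! g : C ⟶ bang X,
      IsComonHom wC dC (w X) (c X) g ∧ g ≫ eps X = f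

section ComonoidMorphisms

variable {M : Type*} [Category M] [MonoidalCategory M] {X Y Z : M}

lemma IsComonHom.comp {wX : X ⟶ 𝟙_ M} {dX : X ⟶ X ⊗ X} {wY : Y ⟶ 𝟙_ M} {dY : Y ⟶ Y ⊗ Y}
    {wZ : Z ⟶ 𝟙_ M} {dZ : Z ⟶ Z ⊗ Z} {f : X ⟶ Y} {g : Y ⟶ Z}
    (hf : IsComonHom wX dX wY dY f) (hg : IsComonHom wY dY wZ dZ g) :
    IsComonHom wX dX wZ dZ (f ≫ g) :=
  ⟨by rw [Category.assoc, hg.1, hf.1], by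
    rw [Category.assoc, hg.2, reassoc_of% hf.2, tensorHom_comp_tensorHom]⟩

lemma IsComonHom.comp_comul_comp_tensorHom {wX : X ⟶ 𝟙_ M} {dX : X ⟶ X ⊗ X}
    {wY : Y ⟶ 𝟙_ M} {dY : Y ⟶ Y ⊗ Y} {g : X ⟶ Y} (hg : IsComonHom wX dX wY dY g) (p : Y ⟶ Z) :
    g ≫ dY ≫ (p ⊗ₘ p) = dX ≫ ((g ≫ p) ⊗ₘ (g ≫ p)) := by
  rw [reassoc_of% hg.2, tensorHom_comp_tensorHom]

lemma IsComonHom.of_comp_of_retraction {wX : X ⟶ 𝟙_ M} {dX : X ⟶ X ⊗ X}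
    {wY : Y ⟶ 𝟙_ M} {dY : Y ⟶ Y ⊗ Y} {wZ : Z ⟶ 𝟙_ M} {dZ : Z ⟶ Z ⊗ Z}
    {f : X ⟶ Y} {s : Y ⟶ Z} {r : Z ⟶ Y} (hfs : IsComonHom wX dX wZ dZ (f ≫ s))
    (hs : IsComonHom wY dY wZ dZ s) (hsr : s ≫ r = 𝟙 Y) : IsComonHom wX dX wY dY f := by
  refine ⟨by rw [← hs.1, ← Category.assoc, hfs.1], ?_⟩
  have hdY : dY = s ≫ dZ ≫ (r ⊗ₘ r) := by
    rw [hs.comp_comul_comp_tensorHom, hsr, id_tensorHom_id, Category.comp_id]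
  rw [hdY, ← Category.assoc, hfs.comp_comul_comp_tensorHom, Category.assoc, hsr, Category.comp_id]

end ComonoidMorphisms

section Comonoids

variable {Y P : L}

lemma IsCComon.of_retraction {wY : Y ⟶ 𝟙_ L} {dY : Y ⟶ Y ⊗ Y} (hY : IsCComon wY dY)
    {h : P ⟶ Y} {r : Y ⟶ P} (hr : h ≫ r = 𝟙 P) {d : P ⟶ P ⊗ P}
    (hd : h ≫ dY = d ≫ (h ⊗ₘ h)) : IsCComon (h ≫ wY) d := by
  have : IsSplitMono (𝟙_ L ◁ h) := .mk' ⟨𝟙_ L ◁ r, by rw [← whiskerLeft_comp, hr, whiskerLeft_id]⟩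
  have : IsSplitMono (h ⊗ₘ h) := .mk' ⟨r ⊗ₘ r, by rw [tensorHom_comp_tensorHom, hr, id_tensorHom_id]⟩
  have : IsSplitMono (h ⊗ₘ h ⊗ₘ h) := .mk' ⟨r ⊗ₘ r ⊗ₘ r, by
    simp only [tensorHom_comp_tensorHom, hr, id_tensorHom_id]⟩
  refine ⟨?_, ?_, ?_⟩
  · rw [← cancel_mono (𝟙_ L ◁ h), ← leftUnitor_inv_naturality, ← hY.counit, reassoc_of% hd]
    simp only [Category.assoc, ← tensorHom_id, ← id_tensorHom, tensorHom_comp_tensorHom,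
      Category.id_comp, Category.comp_id]
  · rw [← cancel_mono (h ⊗ₘ h), Category.assoc, ← BraidedCategory.braiding_naturality,
      ← reassoc_of% hd, hY.comm, hd]
  · have hdY_whisker : (h ≫ dY) ⊗ₘ h = (h ⊗ₘ h) ≫ (dY ▷ Y) := by
      rw [← tensorHom_id, tensorHom_comp_tensorHom, Category.comp_id]
    have hwhisker_dY : h ⊗ₘ (h ≫ dY) = (h ⊗ₘ h) ≫ (Y ◁ dY) := by
      rw [← id_tensorHom, tensorHom_comp_tensorHom, Category.comp_id]
    rw [← cancel_mono (h ⊗ₘ h ⊗ₘ h)]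
    calc (d ≫ (d ▷ P) ≫ (α_ P P P).hom) ≫ (h ⊗ₘ h ⊗ₘ h)
        = d ≫ ((d ≫ (h ⊗ₘ h)) ⊗ₘ h) ≫ (α_ Y Y Y).hom := by
          rw [Category.assoc, Category.assoc, ← associator_naturality, ← tensorHom_id,
            reassoc_of% tensorHom_comp_tensorHom, Category.id_comp]
      _ = h ≫ dY ≫ (dY ▷ Y) ≫ (α_ Y Y Y).hom := by
          rw [← hd, hdY_whisker, Category.assoc, ← reassoc_of% hd]
      _ = h ≫ dY ≫ (Y ◁ dY) := by rw [hY.coassoc]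
      _ = (d ≫ (P ◁ d)) ≫ (h ⊗ₘ h ⊗ₘ h) := by
          rw [reassoc_of% hd, ← hwhisker_dY, hd, ← id_tensorHom, Category.assoc,
            tensorHom_comp_tensorHom, Category.id_comp]

end Comonoids

namespace Lafont

variable (E : Lafont L)

lemma hom_ext {X C : L} {wC : C ⟶ 𝟙_ L} {dC : C ⟶ C ⊗ C} (hC : IsCComon wC dC)
    {g₁ g₂ : C ⟶ E.bang X} (h₁ : IsComonHom wC dC (E.w X) (E.c X) g₁)
    (h₂ : IsComonHom wC dC (E.w X) (E.c X) g₂) (heps : g₁ ≫ E.eps X = g₂ ≫ E.eps X) :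
    g₁ = g₂ := by
  obtain ⟨g, -, hg⟩ := E.cofree wC dC hC (g₂ ≫ E.eps X)
  rw [hg g₁ ⟨h₁, heps⟩, hg g₂ ⟨h₂, rfl⟩]

/-- Here `dg` is the digging of `P` and `bh` is `!h`, so `hcoassoc` is the coassociativity law
of the `!`-coalgebra `(P, h)`. -/
lemma coalgebra_comp_c {P : L} {h : P ⟶ E.bang P} {dg bh : E.bang P ⟶ E.bang (E.bang P)}
    (hdg : IsComonHom (E.w P) (E.c P) (E.w _) (E.c _) dg) (hdg_eps : dg ≫ E.eps _ = 𝟙 _)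
    (hbh : IsComonHom (E.w P) (E.c P) (E.w _) (E.c _) bh) (hbh_eps : bh ≫ E.eps _ = E.eps P ≫ h)
    (hcoassoc : h ≫ dg = h ≫ bh) :
    h ≫ E.c P = (h ≫ E.c P ≫ (E.eps P ⊗ₘ E.eps P)) ≫ (h ⊗ₘ h) :=
  calc h ≫ E.c P = h ≫ dg ≫ E.c _ ≫ (E.eps _ ⊗ₘ E.eps _) := by
        rw [hdg.comp_comul_comp_tensorHom, hdg_eps, id_tensorHom_id, Category.comp_id]
    _ = h ≫ bh ≫ E.c _ ≫ (E.eps _ ⊗ₘ E.eps _) := by rw [reassoc_of% hcoassoc]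
    _ = (h ≫ E.c P ≫ (E.eps P ⊗ₘ E.eps P)) ≫ (h ⊗ₘ h) := by
        rw [hbh.comp_comul_comp_tensorHom, hbh_eps]
        simp only [Category.assoc, tensorHom_comp_tensorHom]

end Lafont

/-- The digging `δ_{!X}` and the functorial action `!f` enter through their characterizations as
comonoid morphisms with prescribed composite with `eps`. -/
theorem stmt15 (E : Lafont L) :
    (∀ (C : L) (wC : C ⟶ 𝟙_ L) (dC : C ⟶ C ⊗ C), IsCComon wC dC →
      ∀ δ : C ⟶ E.bang C,
        (δ ≫ E.eps C = 𝟙 C ∧ δ ≫ E.w C = wC ∧ δ ≫ E.c C = dC ≫ (δ ⊗ₘ δ)) →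
        (∀ dg : E.bang C ⟶ E.bang (E.bang C),
          (dg ≫ E.eps (E.bang C) = 𝟙 (E.bang C) ∧ dg ≫ E.w (E.bang C) = E.w C ∧
            dg ≫ E.c (E.bang C) = E.c C ≫ (dg ⊗ₘ dg)) →
          ∀ bδ : E.bang C ⟶ E.bang (E.bang C),
            (bδ ≫ E.eps (E.bang C) = E.eps C ≫ δ ∧ bδ ≫ E.w (E.bang C) = E.w C ∧
              bδ ≫ E.c (E.bang C) = E.c C ≫ (bδ ⊗ₘ bδ)) →
            δ ≫ dg = δ ≫ bδ) ∧
        δ ≫ E.c C ≫ (E.eps C ⊗ₘ E.eps C) = dC) ∧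
    (∀ (P : L) (h : P ⟶ E.bang P), h ≫ E.eps P = 𝟙 P →
      (∀ dg : E.bang P ⟶ E.bang (E.bang P),
        (dg ≫ E.eps (E.bang P) = 𝟙 (E.bang P) ∧ dg ≫ E.w (E.bang P) = E.w P ∧
          dg ≫ E.c (E.bang P) = E.c P ≫ (dg ⊗ₘ dg)) →
        ∀ bh : E.bang P ⟶ E.bang (E.bang P),
          (bh ≫ E.eps (E.bang P) = E.eps P ≫ h ∧ bh ≫ E.w (E.bang P) = E.w P ∧
            bh ≫ E.c (E.bang P) = E.c P ≫ (bh ⊗ₘ bh)) →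
          h ≫ dg = h ≫ bh) →
      IsCComon (h ≫ E.w P) (h ≫ E.c P ≫ (E.eps P ⊗ₘ E.eps P)) ∧
      h ≫ E.c P = (h ≫ E.c P ≫ (E.eps P ⊗ₘ E.eps P)) ≫ (h ⊗ₘ h)) ∧
    (∀ (C D : L) (wC : C ⟶ 𝟙_ L) (dC : C ⟶ C ⊗ C) (wD : D ⟶ 𝟙_ L) (dD : D ⟶ D ⊗ D),
      IsCComon wC dC → IsCComon wD dD →
      ∀ (δC : C ⟶ E.bang C) (δD : D ⟶ E.bang D),
        (δC ≫ E.eps C = 𝟙 C ∧ δC ≫ E.w C = wC ∧ δC ≫ E.c C = dC ≫ (δC ⊗ₘ δC)) →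
        (δD ≫ E.eps D = 𝟙 D ∧ δD ≫ E.w D = wD ∧ δD ≫ E.c D = dD ≫ (δD ⊗ₘ δD)) →
        ∀ f : C ⟶ D,
          (IsComonHom wC dC wD dD f ↔
            ∀ bf : E.bang C ⟶ E.bang D,
              (bf ≫ E.eps D = E.eps C ≫ f ∧ bf ≫ E.w D = E.w C ∧
                bf ≫ E.c D = E.c C ≫ (bf ⊗ₘ bf)) →
              δC ≫ bf = f ≫ δD)) := by
  refine ⟨?_, ?_, ?_⟩
  · rintro C wC dC hC δ ⟨hδ_eps, hδw, hδc⟩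
    have hδ : IsComonHom wC dC (E.w C) (E.c C) δ := ⟨hδw, hδc⟩
    refine ⟨fun dg ⟨hdg_eps, hdgw, hdgc⟩ bδ ⟨hbδ_eps, hbδw, hbδc⟩ ↦ ?_, ?_⟩
    · refine E.hom_ext hC (hδ.comp ⟨hdgw, hdgc⟩) (hδ.comp ⟨hbδw, hbδc⟩) ?_
      simp only [Category.assoc, hdg_eps, hbδ_eps, reassoc_of% hδ_eps, Category.comp_id]
    · rw [hδ.comp_comul_comp_tensorHom, hδ_eps, id_tensorHom_id, Category.comp_id]
  · intro P h hh_eps hcoassoc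
    obtain ⟨dg, ⟨hdg, hdg_eps⟩, -⟩ := E.cofree _ _ (E.comon P) (𝟙 (E.bang P))
    obtain ⟨bh, ⟨hbh, hbh_eps⟩, -⟩ := E.cofree _ _ (E.comon P) (E.eps P ≫ h)
    have hc := E.coalgebra_comp_c hdg hdg_eps hbh hbh_eps
      (hcoassoc dg ⟨hdg_eps, hdg⟩ bh ⟨hbh_eps, hbh⟩)
    exact ⟨(E.comon P).of_retraction hh_eps hc, hc⟩
  · intro C D wC dC wD dD hC _ δC δD ⟨hδC_eps, hδCw, hδCc⟩ ⟨hδD_eps, hδDw, hδDc⟩ f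
    have hδC : IsComonHom wC dC (E.w C) (E.c C) δC := ⟨hδCw, hδCc⟩
    have hδD : IsComonHom wD dD (E.w D) (E.c D) δD := ⟨hδDw, hδDc⟩
    refine ⟨fun hf bf ⟨hbf_eps, hbfw, hbfc⟩ ↦ ?_, fun hnat ↦ ?_⟩
    · refine E.hom_ext hC (hδC.comp ⟨hbfw, hbfc⟩) (hf.comp hδD) ?_
      simp only [Category.assoc, hbf_eps, reassoc_of% hδC_eps, hδD_eps, Category.comp_id]
    · obtain ⟨bf, ⟨hbf, hbf_eps⟩, -⟩ := E.cofree _ _ (E.comon C) (E.eps C ≫ f)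
      have hfδD : IsComonHom wC dC (E.w D) (E.c D) (f ≫ δD) := by
        rw [← hnat bf ⟨hbf_eps, hbf⟩]
        exact hδC.comp hbf
      exact hfδD.of_comp_of_retraction hδD hδD_eps
end

section
/- Let L be a cartesian SMC in which I = 1 & 1 is exponentiable, with S X = (I ⊸ X), π_i = evaluation at the point w_i : 1 → I, and σ = evaluation at the diagonal Δ : 1 → I. Then (S, π0, π1, σ) is a pre-summability structure (i.e., π0, π1 are jointly monic) if and only if for every object X the morphisms X ⊗ w0 and X ⊗ w1 are jointly epic. -/
/-! Under the adjunction `- ⊗ I ⊣ S`, postcomposing `f : X ⟶ S Y` with evaluation at a point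
`φ : 𝟙_ ⟶ I` corresponds to precomposing the transpose `X ⊗ I ⟶ Y` of `f` with `X ◁ φ`. Since
transposition is a bijection, the evaluations are jointly monic exactly when the whiskered points
are jointly epic, for any pair of points of any exponentiable `I`. -/

open CategoryTheory MonoidalCategory Limits

universe v u

namespace CategoryTheory.MonoidalCategory

variable {L : Type u} [Category.{v} L] [MonoidalCategory L] {I : L} {S : L ⥤ L}

def evalAt (adj : tensorRight I ⊣ S) (φ : 𝟙_ L ⟶ I) (Y : L) : S.obj Y ⟶ Y :=
  (ρ_ (S.obj Y)).inv ≫ (S.obj Y ◁ φ) ≫ adj.counit.app Y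

lemma comp_evalAt (adj : tensorRight I ⊣ S) (φ : 𝟙_ L ⟶ I) {X Y : L} (f : X ⟶ S.obj Y) :
    f ≫ evalAt adj φ Y = (ρ_ X).inv ≫ (X ◁ φ) ≫ (adj.homEquiv X Y).symm f := by
  have unitor : f ≫ (ρ_ (S.obj Y)).inv = (ρ_ X).inv ≫ (f ▷ 𝟙_ L) := by simp
  have exchange : (f ▷ 𝟙_ L) ≫ (S.obj Y ◁ φ) = (X ◁ φ) ≫ (f ▷ I) :=
    (whisker_exchange f φ).symm
  rw [evalAt, Adjunction.homEquiv_counit, reassoc_of% unitor, reassoc_of% exchange]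
  rfl

lemma comp_evalAt_eq_comp_evalAt_iff (adj : tensorRight I ⊣ S) (φ : 𝟙_ L ⟶ I) {X Y : L}
    (f g : X ⟶ S.obj Y) :
    f ≫ evalAt adj φ Y = g ≫ evalAt adj φ Y ↔
      (X ◁ φ) ≫ (adj.homEquiv X Y).symm f = (X ◁ φ) ≫ (adj.homEquiv X Y).symm g := by
  rw [comp_evalAt, comp_evalAt, cancel_epi]

lemma evalAt_jointlyMono_iff_whiskerLeft_jointlyEpi (adj : tensorRight I ⊣ S)
    (φ₀ φ₁ : 𝟙_ L ⟶ I) :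
    (∀ {X Y : L} (f g : X ⟶ S.obj Y), f ≫ evalAt adj φ₀ Y = g ≫ evalAt adj φ₀ Y →
        f ≫ evalAt adj φ₁ Y = g ≫ evalAt adj φ₁ Y → f = g) ↔
      (∀ (X : L) {Y : L} (f g : X ⊗ I ⟶ Y), (X ◁ φ₀) ≫ f = (X ◁ φ₀) ≫ g →
        (X ◁ φ₁) ≫ f = (X ◁ φ₁) ≫ g → f = g) := by
  constructor
  · intro hmono X Y f g h₀ h₁
    apply (adj.homEquiv X Y).injective
    apply hmono <;> simpa only [comp_evalAt_eq_comp_evalAt_iff, Equiv.symm_apply_apply]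
  · intro hepi X Y f g h₀ h₁
    apply (adj.homEquiv X Y).symm.injective
    exact hepi X _ _ ((comp_evalAt_eq_comp_evalAt_iff adj φ₀ f g).mp h₀)
      ((comp_evalAt_eq_comp_evalAt_iff adj φ₁ f g).mp h₁)

end CategoryTheory.MonoidalCategory

/-- In a cartesian SMC (enriched over pointed sets) where `I = 1 & 1` is
exponentiable (via a right adjoint `Sfun` of `_ ⊗ I`), with
`π_i = evaluation at w_i` and `σ = evaluation at the diagonal`, the pair
`(π0, π1)` is jointly monic (i.e. `(Sfun, π0, π1, σ)` is a pre-summability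
structure) iff for every `X` the morphisms `X ⊗ w0` and `X ⊗ w1` are
jointly epic. -/
theorem stmt18 {L : Type u} [Category.{v} L] [MonoidalCategory L]
    [HasZeroMorphisms L] [HasBinaryProducts L]
    (Sfun : L ⥤ L) (adj : tensorRight (𝟙_ L ⨯ 𝟙_ L) ⊣ Sfun) :
    let I : L := 𝟙_ L ⨯ 𝟙_ L
    let w0 : 𝟙_ L ⟶ I := prod.lift (𝟙 (𝟙_ L)) 0
    let w1 : 𝟙_ L ⟶ I := prod.lift 0 (𝟙 (𝟙_ L))
    let evAt : ∀ (_ : 𝟙_ L ⟶ I) (X : L), Sfun.obj X ⟶ X := fun φ X =>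
      (ρ_ (Sfun.obj X)).inv ≫ (Sfun.obj X ◁ φ) ≫ adj.counit.app X
    ((∀ {X Y : L} (f g : X ⟶ Sfun.obj Y),
        f ≫ evAt w0 Y = g ≫ evAt w0 Y → f ≫ evAt w1 Y = g ≫ evAt w1 Y → f = g)
      ↔
      (∀ (X : L) {Y : L} (f g : X ⊗ I ⟶ Y),
        (X ◁ w0) ≫ f = (X ◁ w0) ≫ g → (X ◁ w1) ≫ f = (X ◁ w1) ≫ g → f = g)) :=
  evalAt_jointlyMono_iff_whiskerLeft_jointlyEpi adj _ _
end
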